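/- Let M be a compact metric space, φ:ℝ×M→M a continuous flow without fixed points that is separating, ε₀(φ) = inf({τ>0 : ∃x∈M with φ_τ(x)=x and φ_t(x)≠x for all t∈(0,τ)} ∪ {1}), and let ψ:ℝ×M→M be a continuous flow commuting with φ. Then there exist a constant a>0, a constant μ∈(0, ε₀(φ)/3), and a continuous function z:[−a,a]×M→[−μ,μ] such that ψ_s(x) = φ_{z(s,x)}(x) for every (s,x)∈[−a,a]×M. -/

import Mathlib

/-!
For each point `x`, the pairs `(s, τ)` with `ψ_s x = φ_τ x` form a closed subgroup of `ℝ²`.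
Separation puts `ψ_s x` on the `φ`-orbit of `x` for small `|s|`, hence for all `s`, so the
subgroup meets every vertical line; being uncountable, it is not discrete and thus contains a
line through the origin, which is not vertical because `x` is not fixed. Hence
`ψ_s x = φ_{α(x) s} x` for a unique slope `α(x)`. Since `φ` has no fixed points, `M` is compact
and `φ` is continuous, periods are bounded away from `0`, so `ε₀ > 0`, and for `μ = ε₀/6` the
displacement `d(φ_μ x, x)` is bounded below; as `ψ_s` is uniformly close to the identity for
small `s`, this bounds `α`. A bounded `α` has a closed graph with compact range, hence is
continuous, and `z(s, x) = α(x) s` works on `[-a, a] × M` for small `a`.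
-/

open Set Filter Topology Metric

theorem AddSubgroup.accPt_zero_of_not_countable {E : Type*} [AddCommGroup E] [TopologicalSpace E]
    [IsTopologicalAddGroup E] [SecondCountableTopology E] (G : AddSubgroup E)
    (hG : ¬ (G : Set E).Countable) : AccPt 0 (𝓟 (G : Set E)) := by
  by_contra h
  have : DiscreteTopology G := by
    refine discreteTopology_of_isOpen_singleton_zero ?_
    rw [isOpen_singleton_iff_punctured_nhds, nhds_ne_subtype_eq_bot_iff]
    exact not_neBot.mp h
  exact hG (Set.countable_coe_iff.mp countable_of_Lindelof_of_discrete)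

theorem dist_smul_floor_zsmul_le {E : Type*} [NormedAddCommGroup E] [NormedSpace ℝ E]
    (t : ℝ) (v d : E) : dist (t • v) (⌊t / ‖d‖⌋ • d) ≤ |t| * dist (‖d‖⁻¹ • d) v + ‖d‖ := by
  have hfract : t • ‖d‖⁻¹ • d - ⌊t / ‖d‖⌋ • d = Int.fract (t / ‖d‖) • d := by
    rw [smul_smul, ← Int.cast_smul_eq_zsmul ℝ, ← sub_smul, Int.fract, div_eq_mul_inv]
  calc dist (t • v) (⌊t / ‖d‖⌋ • d)
      ≤ dist (t • v) (t • ‖d‖⁻¹ • d) + dist (t • ‖d‖⁻¹ • d) (⌊t / ‖d‖⌋ • d) :=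
        dist_triangle _ _ _
    _ = |t| * dist (‖d‖⁻¹ • d) v + Int.fract (t / ‖d‖) * ‖d‖ := by
        rw [dist_smul₀, dist_comm v, dist_eq_norm _ (⌊t / ‖d‖⌋ • d), hfract, norm_smul,
          Real.norm_eq_abs, Real.norm_eq_abs, abs_of_nonneg (Int.fract_nonneg (t / ‖d‖))]
    _ ≤ |t| * dist (‖d‖⁻¹ • d) v + 1 * ‖d‖ := by
        gcongr
        exact (Int.fract_lt_one _).le
    _ = |t| * dist (‖d‖⁻¹ • d) v + ‖d‖ := by rw [one_mul]

theorem AddSubgroup.exists_forall_smul_mem_of_accPt_zero {E : Type*} [NormedAddCommGroup E]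
    [NormedSpace ℝ E] [ProperSpace E] (G : AddSubgroup E) (hGc : IsClosed (G : Set E))
    (hG : AccPt 0 (𝓟 (G : Set E))) : ∃ v ≠ 0, ∀ t : ℝ, t • v ∈ G := by
  -- `v` is a limit direction of short elements `d` of `G`; multiples of `d` approximate `t • v`.
  set F := 𝓝[≠] (0 : E) ⊓ 𝓟 (G : Set E)
  have hF : NeBot F := hG
  have hdir : Filter.map (fun d : E => ‖d‖⁻¹ • d) F ≤ 𝓟 (sphere 0 1) := by
    rw [Filter.map_le_iff_le_comap, comap_principal]
    refine le_principal_iff.mpr (mem_inf_of_left (mem_of_superset self_mem_nhdsWithin ?_))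
    intro d hd
    simp [norm_smul, inv_mul_cancel₀ (norm_ne_zero_iff.mpr hd)]
  obtain ⟨v, hv, hvF⟩ := (isCompact_sphere (0 : E) 1).exists_clusterPt hdir
  refine ⟨v, ne_zero_of_mem_unit_sphere ⟨v, hv⟩, fun t => ?_⟩
  refine hGc.closure_subset_iff.mpr le_rfl (Metric.mem_closure_iff.mpr fun ε hε => ?_)
  set η := ε / (2 * (|t| + 1))
  have hη : 0 < η := by positivity
  have htη : |t| * η ≤ ε / 2 := by
    rw [show |t| * η = ε / 2 * (|t| / (|t| + 1)) by simp only [η]; field_simp]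
    exact mul_le_of_le_one_right (half_pos hε).le
      ((div_le_one (by positivity)).mpr (le_add_of_nonneg_right zero_le_one))
  have hdir_near : ∃ᶠ d in F, ‖d‖⁻¹ • d ∈ ball v η :=
    (hvF.frequently (ball_mem_nhds v hη) :)
  have hsmall : ∀ᶠ d in F, d ∈ G ∧ ‖d‖ < ε / 2 := by
    have hmem : ∀ᶠ d in F, d ∈ G := mem_inf_of_right (mem_principal_self _)
    have hnorm : ∀ᶠ d in F, ‖d‖ < ε / 2 := mem_inf_of_left (mem_nhdsWithin_of_mem_nhds
      (mem_of_superset (ball_mem_nhds 0 (half_pos hε)) fun d => mem_ball_zero_iff.mp))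
    exact hmem.and hnorm
  obtain ⟨d, hdv, hdG, hdε⟩ := (hdir_near.and_eventually hsmall).exists
  refine ⟨⌊t / ‖d‖⌋ • d, zsmul_mem hdG _, ?_⟩
  calc dist (t • v) (⌊t / ‖d‖⌋ • d) ≤ |t| * dist (‖d‖⁻¹ • d) v + ‖d‖ :=
        dist_smul_floor_zsmul_le t v d
    _ ≤ |t| * η + ‖d‖ := by gcongr; exact (mem_ball.mp hdv).le
    _ < ε := by linarith

theorem AddSubgroup.exists_forall_smul_mem_of_forall_exists_mk_mem (G : AddSubgroup (ℝ × ℝ))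
    (hGc : IsClosed (G : Set (ℝ × ℝ))) (hG : ∀ s, ∃ τ, (s, τ) ∈ G) :
    ∃ v ≠ 0, ∀ t : ℝ, t • v ∈ G := by
  refine G.exists_forall_smul_mem_of_accPt_zero hGc (G.accPt_zero_of_not_countable fun hc => ?_)
  refine Cardinal.not_countable_real ((hc.image Prod.fst).mono fun s _ => ?_)
  obtain ⟨τ, hτ⟩ := hG s
  exact ⟨(s, τ), hτ, rfl⟩

theorem AddSubgroup.eq_top_of_mem_nhds_zero {G : Type*} [AddGroup G] [TopologicalSpace G]
    [IsTopologicalAddGroup G] [ConnectedSpace G] (H : AddSubgroup G)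
    (hH : (H : Set G) ∈ 𝓝 0) : H = ⊤ := by
  have hopen := H.isOpen_of_mem_nhds hH
  exact SetLike.coe_injective <|
    IsClopen.eq_univ ⟨H.isClosed_of_isOpen hopen, hopen⟩ ⟨0, H.zero_mem⟩

theorem continuous_of_isClosed_graph {X Y : Type*} [TopologicalSpace X] [TopologicalSpace Y]
    [CompactSpace Y] {f : X → Y} (hf : IsClosed {p : X × Y | p.2 = f p.1}) : Continuous f := by
  refine continuous_iff_isClosed.mpr fun C hC => ?_
  have : f ⁻¹' C = Prod.fst '' ({p : X × Y | p.2 = f p.1} ∩ univ ×ˢ C) := by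
    ext x
    simp
  rw [this]
  exact isClosedMap_fst_of_compactSpace _ (hf.inter (isClosed_univ.prod hC))

namespace Flow

section Periods

variable {τ α : Type*} [TopologicalSpace τ] [AddGroup τ] [TopologicalSpace α] (ϕ : Flow τ α)

def periods (x : α) : AddSubgroup τ where
  carrier := {t | ϕ t x = x}
  zero_mem' := ϕ.map_zero_apply x
  add_mem' {s t} hs ht := by simp_all [map_add]
  neg_mem' {t} ht := by
    simp only [Set.mem_ofPred_eq] at ht ⊢
    conv_lhs => rw [← ht, ← map_add, neg_add_cancel, map_zero_apply]

theorem mem_periods {x : α} {t : τ} : t ∈ ϕ.periods x ↔ ϕ t x = x := Iff.rfl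

end Periods

section Coincidence

variable {τ α : Type*} [TopologicalSpace τ] [AddCommGroup τ] [TopologicalSpace α]
  (ϕ ψ : Flow τ α) (hcomm : ∀ s t x, ψ s (ϕ t x) = ϕ t (ψ s x))

def coincidenceSubgroup (x : α) : AddSubgroup (τ × τ) where
  carrier := {p | ψ p.1 x = ϕ p.2 x}
  zero_mem' := by simp only [mem_ofPred_eq, Prod.fst_zero, Prod.snd_zero, map_zero_apply]
  add_mem' {p q} hp hq := by
    simp only [mem_ofPred_eq, Prod.fst_add, Prod.snd_add] at hp hq ⊢
    rw [map_add, hq, hcomm, hp, add_comm, map_add]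
  neg_mem' {p} hp := by
    simp only [mem_ofPred_eq, Prod.fst_neg, Prod.snd_neg] at hp ⊢
    calc ψ (-p.1) x = ψ (-p.1) (ϕ (-p.2) (ϕ p.2 x)) := by
          rw [← map_add, neg_add_cancel, map_zero_apply]
      _ = ϕ (-p.2) (ψ (-p.1) (ψ p.1 x)) := by rw [← hp, hcomm]
      _ = ϕ (-p.2) x := by rw [← map_add, neg_add_cancel, map_zero_apply]

theorem mem_coincidenceSubgroup {x : α} {p : τ × τ} :
    p ∈ coincidenceSubgroup ϕ ψ hcomm x ↔ ψ p.1 x = ϕ p.2 x := Iff.rfl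

theorem isClosed_coincidenceSubgroup [T2Space α] (x : α) :
    IsClosed (coincidenceSubgroup ϕ ψ hcomm x : Set (τ × τ)) :=
  isClosed_eq (ψ.continuous continuous_fst continuous_const)
    (ϕ.continuous continuous_snd continuous_const)

end Coincidence

section Real

variable {α : Type*} [TopologicalSpace α] (ϕ : Flow ℝ α)

theorem apply_toIcoMod {x : α} {p : ℝ} (hp : 0 < p) (hpx : p ∈ ϕ.periods x) (a t : ℝ) :
    ϕ (toIcoMod hp a t) x = ϕ t x := by
  have : -(toIcoDiv hp a t • p) ∈ ϕ.periods x := neg_mem (zsmul_mem hpx _)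
  rw [← self_sub_toIcoDiv_zsmul, sub_eq_add_neg, map_add, ϕ.mem_periods.mp this]

def minimalPeriods : Set ℝ :=
  {p | 0 < p ∧ ∃ x, ϕ p x = x ∧ ∀ t ∈ Ioo 0 p, ϕ t x ≠ x}

theorem eq_of_forall_apply_mul_eq {x : α} (hx : ∃ t, ϕ t x ≠ x) {a b : ℝ}
    (h : ∀ s, ϕ (a * s) x = ϕ (b * s) x) : a = b := by
  by_contra hab
  obtain ⟨t, ht⟩ := hx
  set s := t / (b - a)
  have hts : -(a * s) + b * s = t := by
    rw [neg_add_eq_sub, ← sub_mul, mul_div_cancel₀ t (sub_ne_zero.mpr (Ne.symm hab))]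
  have hs := congrArg (ϕ (-(a * s))) (h s)
  rw [← map_add, ← map_add, neg_add_cancel, map_zero_apply, hts] at hs
  exact ht hs.symm

theorem exists_forall_eq_apply_mul [T2Space α] (ψ : Flow ℝ α)
    (hcomm : ∀ s t x, ψ s (ϕ t x) = ϕ t (ψ s x)) {x : α} (hx : ∃ t, ϕ t x ≠ x)
    (hψx : ∀ s, ∃ τ, ψ s x = ϕ τ x) : ∃ a : ℝ, ∀ s, ψ s x = ϕ (a * s) x := by
  obtain ⟨v, hv, hline⟩ := (coincidenceSubgroup ϕ ψ hcomm x)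
    |>.exists_forall_smul_mem_of_forall_exists_mk_mem (isClosed_coincidenceSubgroup ϕ ψ hcomm x) hψx
  have hv1 : v.1 ≠ 0 := by
    intro hv1
    have hv2 : v.2 ≠ 0 := fun hv2 => hv (Prod.ext hv1 hv2)
    obtain ⟨t, ht⟩ := hx
    have hvert := (mem_coincidenceSubgroup ϕ ψ hcomm).mp (hline (t / v.2))
    simp only [Prod.smul_fst, Prod.smul_snd, smul_eq_mul, hv1, mul_zero, map_zero_apply,
      div_mul_cancel₀ t hv2] at hvert
    exact ht hvert.symm
  refine ⟨v.2 / v.1, fun s => ?_⟩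
  have hs := (mem_coincidenceSubgroup ϕ ψ hcomm).mp (hline (s / v.1))
  simp only [Prod.smul_fst, Prod.smul_snd, smul_eq_mul, div_mul_cancel₀ s hv1] at hs
  rwa [div_mul_comm]

end Real

section Metric

variable {M : Type*} [MetricSpace M] (ϕ ψ : Flow ℝ M)

theorem continuous_of_forall_eq_apply_mul (hϕ : ∀ x, ∃ t, ϕ t x ≠ x) {a : M → ℝ}
    (ha : ∀ x s, ψ s x = ϕ (a x * s) x) {C : ℝ} (hC : ∀ x, |a x| ≤ C) : Continuous a := by
  let f : M → Icc (-C) C := fun x => ⟨a x, abs_le.mp (hC x)⟩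
  have hgraph : {p : M × Icc (-C) C | p.2 = f p.1} = ⋂ s, {p | ψ s p.1 = ϕ (p.2 * s) p.1} := by
    ext p
    simp only [mem_ofPred_eq, mem_iInter]
    refine ⟨fun hp s => by rw [hp, ha], fun hp => Subtype.ext ?_⟩
    exact ϕ.eq_of_forall_apply_mul_eq (hϕ p.1) fun s => (hp s).symm.trans (ha p.1 s)
  have hf : Continuous f := continuous_of_isClosed_graph <| hgraph ▸ isClosed_iInter fun s =>
    isClosed_eq (ψ.continuous continuous_const continuous_fst)
      (ϕ.continuous ((continuous_subtype_val.comp continuous_snd).mul continuous_const)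
        continuous_fst)
  exact continuous_subtype_val.comp hf

variable [CompactSpace M]

theorem exists_pos_forall_abs_le_dist_lt {ρ : ℝ} (hρ : 0 < ρ) :
    ∃ c > 0, ∀ x t, |t| ≤ c → dist (ϕ t x) x < ρ := by
  have hK : IsCompact (Icc (-1 : ℝ) 1 ×ˢ (univ : Set M)) := isCompact_Icc.prod isCompact_univ
  obtain ⟨δ, hδ, hU⟩ := Metric.uniformContinuousOn_iff.mp
    (hK.uniformContinuousOn_of_continuous
      (ϕ.continuous continuous_fst continuous_snd).continuousOn) ρ hρ
  refine ⟨min (δ / 2) 1, by positivity, fun x t ht => ?_⟩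
  have ht1 : |t| ≤ 1 := ht.trans (min_le_right _ _)
  have := hU (t, x) ⟨abs_le.mp ht1, mem_univ x⟩ (0, x) ⟨by norm_num, mem_univ x⟩ (by
    rw [Prod.dist_eq, dist_self, Real.dist_0_eq_abs, max_eq_left (abs_nonneg t)]
    linarith [min_le_left (δ / 2) 1])
  simpa [map_zero_apply] using this

theorem exists_pos_forall_exists_le_dist (hϕ : ∀ x, ∃ t, ϕ t x ≠ x) :
    ∃ ρ > 0, ∀ x, ∃ t, ρ ≤ dist (ϕ t x) x := by
  let U : ℕ → Set M := fun n => ⋃ t, {x | 1 / ((n : ℝ) + 1) < dist (ϕ t x) x}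
  have hU : ∀ n, IsOpen (U n) := fun n =>
    isOpen_iUnion fun t => isOpen_lt continuous_const ((ϕ.continuous_toFun t).dist continuous_id)
  have hmono : Monotone U := by
    intro m n hmn x hx
    obtain ⟨t, ht⟩ := mem_iUnion.mp hx
    refine mem_iUnion.mpr ⟨t, lt_of_le_of_lt (b := 1 / ((m : ℝ) + 1)) ?_ ht⟩
    gcongr
  have hcover : univ ⊆ ⋃ n, U n := by
    intro x _
    obtain ⟨t, ht⟩ := hϕ x
    obtain ⟨n, hn⟩ := exists_nat_one_div_lt (dist_pos.mpr ht)
    exact mem_iUnion.mpr ⟨n, mem_iUnion.mpr ⟨t, hn⟩⟩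
  obtain ⟨n, hn⟩ := isCompact_univ.elim_directed_cover U hU hcover hmono.directed_le
  refine ⟨1 / ((n : ℝ) + 1), by positivity, fun x => ?_⟩
  obtain ⟨t, ht⟩ := mem_iUnion.mp (hn (mem_univ x))
  exact ⟨t, ht.le⟩

theorem exists_pos_forall_lt_of_mem_periods (hϕ : ∀ x, ∃ t, ϕ t x ≠ x) :
    ∃ c > 0, ∀ x p, 0 < p → p ∈ ϕ.periods x → c < p := by
  obtain ⟨ρ, hρ, hfar⟩ := ϕ.exists_pos_forall_exists_le_dist hϕ
  obtain ⟨c, hc, hnear⟩ := ϕ.exists_pos_forall_abs_le_dist_lt hρ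
  refine ⟨c, hc, fun x p hp hpx => lt_of_not_ge fun hpc => ?_⟩
  obtain ⟨t, ht⟩ := hfar x
  have hmod := toIcoMod_mem_Ico hp 0 t
  rw [zero_add] at hmod
  have := hnear x (toIcoMod hp 0 t) (abs_le.mpr ⟨by linarith [hmod.1], by linarith [hmod.2]⟩)
  rw [ϕ.apply_toIcoMod hp hpx] at this
  linarith

theorem sInf_minimalPeriods_union_one_pos (hϕ : ∀ x, ∃ t, ϕ t x ≠ x) :
    0 < sInf (ϕ.minimalPeriods ∪ {1}) := by
  obtain ⟨c, hc, hcp⟩ := ϕ.exists_pos_forall_lt_of_mem_periods hϕ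
  refine (lt_min hc one_pos).trans_le (le_csInf ⟨1, Or.inr rfl⟩ ?_)
  rintro p (⟨hp, x, hpx, -⟩ | rfl)
  · exact (min_le_left _ _).trans (hcp x p hp hpx).le
  · exact min_le_right _ _

theorem sInf_minimalPeriods_union_one_le (hϕ : ∀ x, ∃ t, ϕ t x ≠ x) {x : M} {p : ℝ}
    (hp : 0 < p) (hpx : p ∈ ϕ.periods x) : sInf (ϕ.minimalPeriods ∪ {1}) ≤ p := by
  obtain ⟨c, hc, hcp⟩ := ϕ.exists_pos_forall_lt_of_mem_periods hϕ
  let P : Set ℝ := {t | 0 < t ∧ t ∈ ϕ.periods x}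
  have hPc : ∀ t ∈ P, c ≤ t := fun t ht => (hcp x t ht.1 ht.2).le
  have hP : P = Ici c ∩ {t | ϕ t x = x} := by
    ext t
    exact ⟨fun ht => ⟨hPc t ht, ht.2⟩, fun ht => ⟨hc.trans_le ht.1, ht.2⟩⟩
  have hPclosed : IsClosed P := hP ▸
    isClosed_Ici.inter (isClosed_eq (ϕ.continuous continuous_id continuous_const) continuous_const)
  have hmin : sInf P ∈ P := hPclosed.csInf_mem ⟨p, hp, hpx⟩ ⟨c, hPc⟩
  have hminimal : sInf P ∈ ϕ.minimalPeriods :=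
    ⟨hmin.1, x, hmin.2, fun t ht htx => (csInf_le ⟨c, hPc⟩ ⟨ht.1, htx⟩).not_gt ht.2⟩
  calc sInf (ϕ.minimalPeriods ∪ {1}) ≤ sInf P := csInf_le ⟨0, ?_⟩ (Or.inl hminimal)
    _ ≤ p := csInf_le ⟨c, hPc⟩ ⟨hp, hpx⟩
  rintro q (⟨hq, -⟩ | rfl)
  · exact hq.le
  · exact zero_le_one

theorem exists_eq_apply_of_separating (hcomm : ∀ s t x, ψ s (ϕ t x) = ϕ t (ψ s x))
    (hsep : ∃ δ > 0, ∀ x y, (∀ t, dist (ϕ t x) (ϕ t y) < δ) → ∃ s, ϕ s x = y) (x : M) (s : ℝ) :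
    ∃ τ, ψ s x = ϕ τ x := by
  obtain ⟨δ, hδ, hsep⟩ := hsep
  obtain ⟨c, hc, hnear⟩ := ψ.exists_pos_forall_abs_le_dist_lt hδ
  -- `H` is the group of times `s` with `ψ s x` on the `ϕ`-orbit of `x`; it contains `[-c, c]`.
  let H := (coincidenceSubgroup ϕ ψ hcomm x).map (AddMonoidHom.fst ℝ ℝ)
  have hIcc : Icc (-c) c ⊆ H := by
    intro s hs
    have hclose : ∀ t, dist (ϕ t x) (ϕ t (ψ s x)) < δ := fun t => by
      rw [← hcomm, dist_comm]
      exact hnear _ s (abs_le.mpr hs)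
    obtain ⟨τ, hτ⟩ := hsep x (ψ s x) hclose
    exact ⟨(s, τ), hτ.symm, rfl⟩
  have hH : H = ⊤ :=
    H.eq_top_of_mem_nhds_zero (mem_of_superset (Icc_mem_nhds (by linarith) hc) hIcc)
  obtain ⟨p, hp, rfl⟩ := AddSubgroup.mem_map.mp (hH ▸ AddSubgroup.mem_top s : s ∈ H)
  exact ⟨p.2, hp⟩

theorem exists_pos_forall_abs_mul_le {a : M → ℝ} (ha : ∀ x s, ψ s x = ϕ (a x * s) x) {μ : ℝ}
    (hμ : 0 < μ) (hμϕ : ∀ x, ϕ μ x ≠ x) : ∃ c > 0, ∀ x, |a x| * c ≤ μ := by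
  obtain ⟨η, hη, hfar⟩ := isCompact_univ.exists_forall_le'
    ((ϕ.continuous continuous_const continuous_id).dist continuous_id).continuousOn
    (fun x _ => dist_pos.mpr (hμϕ x))
  obtain ⟨c, hc, hnear⟩ := ψ.exists_pos_forall_abs_le_dist_lt hη
  -- A steeper slope would let a `ψ`-time shorter than `c` carry `x` to `ϕ μ x`, at distance `≥ η`.
  refine ⟨c, hc, fun x => le_of_not_gt fun hlt => ?_⟩
  have hax : 0 < |a x| := pos_of_mul_pos_left (hμ.trans hlt) hc.le
  have hs : |μ / a x| ≤ c := by
    rw [abs_div, abs_of_pos hμ, div_le_iff₀ hax, mul_comm]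
    exact hlt.le
  have := hnear x _ hs
  rw [ha, mul_div_cancel₀ μ (abs_pos.mp hax)] at this
  exact (hfar x (mem_univ x)).not_gt this

end Metric

end Flow

/-- For a separating fixed-point-free flow `φ` and a commuting flow `ψ`,
there are `a > 0`, `μ ∈ (0, ε₀(φ)/3)` and a continuous `z : [−a,a] × M → [−μ,μ]` with
`ψ_s(x) = φ_{z(s,x)}(x)`. -/
theorem stmt_10 {M : Type*} [MetricSpace M] [CompactSpace M]
    (φ : ℝ → M → M)
    (hφcont : Continuous fun p : ℝ × M => φ p.1 p.2)
    (hφ0 : ∀ x, φ 0 x = x)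
    (hφadd : ∀ t s x, φ (t + s) x = φ t (φ s x))
    (hnofix : ∀ x : M, ∃ t : ℝ, φ t x ≠ x)
    (hsep : ∃ δ > 0, ∀ x y : M, (∀ t : ℝ, dist (φ t x) (φ t y) < δ) →
      ∃ s : ℝ, φ s x = y)
    (ε₀ : ℝ)
    (hε₀ : ε₀ = sInf ({τ : ℝ | 0 < τ ∧ ∃ x : M, φ τ x = x ∧ ∀ t ∈ Set.Ioo 0 τ, φ t x ≠ x}
      ∪ {1}))
    (ψ : ℝ → M → M)
    (hψcont : Continuous fun p : ℝ × M => ψ p.1 p.2)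
    (hψ0 : ∀ x, ψ 0 x = x)
    (hψadd : ∀ t s x, ψ (t + s) x = ψ t (ψ s x))
    (hcomm : ∀ s t : ℝ, ∀ x : M, ψ s (φ t x) = φ t (ψ s x)) :
    ∃ a > 0, ∃ μ ∈ Set.Ioo 0 (ε₀ / 3), ∃ z : ℝ → M → ℝ,
      ContinuousOn (fun p : ℝ × M => z p.1 p.2) (Set.Icc (-a) a ×ˢ Set.univ) ∧
      ∀ s ∈ Set.Icc (-a) a, ∀ x : M,
        z s x ∈ Set.Icc (-μ) μ ∧ ψ s x = φ (z s x) x := by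
  let Φ : Flow ℝ M := ⟨φ, hφcont, hφadd, hφ0⟩
  let Ψ : Flow ℝ M := ⟨ψ, hψcont, hψadd, hψ0⟩
  have hε₀Φ : ε₀ = sInf (Φ.minimalPeriods ∪ {1}) := hε₀
  have hε₀pos : 0 < ε₀ := hε₀Φ ▸ Φ.sInf_minimalPeriods_union_one_pos hnofix
  choose α hα using fun x =>
    Φ.exists_forall_eq_apply_mul Ψ hcomm (hnofix x) (Φ.exists_eq_apply_of_separating Ψ hcomm hsep x)
  set μ := ε₀ / 6 with hμdef
  have hμ : ∀ x, φ μ x ≠ x := fun x hx =>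
    (Φ.sInf_minimalPeriods_union_one_le hnofix (by positivity) hx).not_gt (by linarith)
  obtain ⟨a, ha, hαa⟩ := Φ.exists_pos_forall_abs_mul_le Ψ hα (by positivity) hμ
  have hαcont : Continuous α :=
    Φ.continuous_of_forall_eq_apply_mul Ψ hnofix hα fun x => (le_div_iff₀ ha).mpr (hαa x)
  refine ⟨a, ha, μ, ⟨by positivity, by linarith⟩, fun s x => α x * s,
    ((hαcont.comp continuous_snd).mul continuous_fst).continuousOn, fun s hs x => ⟨?_, hα x s⟩⟩
  have hz : |α x * s| ≤ μ := by
    rw [abs_mul]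
    exact (mul_le_mul_of_nonneg_left (abs_le.mpr hs) (abs_nonneg _)).trans (hαa x)
  exact abs_le.mp hz
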